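/- arXiv:math/0207147 — 4 statements merged into one kernel-verified Lean document; each statement's English description precedes it below -/
import Mathlib

section
/- The intersection of the three planar lattices generated respectively by {(√3,0),(0,1)}, {(√3/2,1/2),(-√3/2,3/2)}, and {(-√3/2,1/2),(√3/2,3/2)} equals the lattice generated by {(√3,1),(0,2)}. -/
/-- The intersection of the three rectangular planar lattices equals the
lattice generated by (√3,1) and (0,2). -/
theorem hexagonal_intersection :
    Submodule.span ℤ ({(Real.sqrt 3, 0), (0, 1)} : Set (ℝ × ℝ)) ⊓
      Submodule.span ℤ ({(Real.sqrt 3 / 2, 1 / 2), (-Real.sqrt 3 / 2, 3 / 2)} : Set (ℝ × ℝ)) ⊓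
      Submodule.span ℤ ({(-Real.sqrt 3 / 2, 1 / 2), (Real.sqrt 3 / 2, 3 / 2)} : Set (ℝ × ℝ)) =
    Submodule.span ℤ ({(Real.sqrt 3, 1), (0, 2)} : Set (ℝ × ℝ)) := by
  have hs : Real.sqrt 3 ≠ 0 := by positivity
  apply le_antisymm
  · rintro x ⟨⟨h1, h2⟩, -⟩
    rw [SetLike.mem_coe, Submodule.mem_span_pair] at h1 h2
    rw [Submodule.mem_span_pair]
    obtain ⟨a, b, hab⟩ := h1
    obtain ⟨c, d, hcd⟩ := h2
    simp only [Prod.smul_mk, zsmul_eq_mul, Prod.mk_add_mk, Prod.ext_iff] at hab hcd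
    obtain ⟨ha1, ha2⟩ := hab
    obtain ⟨hc1, hc2⟩ := hcd
    -- x.1 = a√3 = (c-d)√3/2, x.2 = b = (c+3d)/2
    have key : (2*a : ℝ) = c - d := by
      have h := ha1.trans hc1.symm
      have := mul_right_cancel₀ hs (by ring_nf; ring_nf at h; linarith : (2*(a:ℝ)) * Real.sqrt 3 = ((c:ℝ) - d) * Real.sqrt 3)
      exact this
    have key2 : (2*b : ℝ) = c + 3*d := by
      have h := ha2.trans hc2.symm
      push_cast at h ⊢
      linarith
    have hbd : (b : ℝ) = a + 2*d := by linarith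
    refine ⟨a, d, ?_⟩
    simp only [Prod.smul_mk, zsmul_eq_mul, Prod.mk_add_mk, Prod.ext_iff]
    constructor
    · rw [← ha1]; ring
    · rw [← ha2]; push_cast; linarith
  · rw [Submodule.span_le]
    rintro y (rfl | rfl)
    · refine ⟨⟨?_, ?_⟩, ?_⟩ <;> rw [SetLike.mem_coe, Submodule.mem_span_pair]
      · exact ⟨1, 1, by norm_num⟩
      · exact ⟨2, 0, by norm_num; ring⟩
      · refine ⟨-1, 1, ?_⟩
        simp only [Prod.smul_mk, zsmul_eq_mul, Prod.mk_add_mk, Prod.ext_iff]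
        push_cast
        constructor <;> ring
    · refine ⟨⟨?_, ?_⟩, ?_⟩ <;> rw [SetLike.mem_coe, Submodule.mem_span_pair]
      · exact ⟨0, 2, by norm_num⟩
      · refine ⟨1, 1, ?_⟩
        simp only [Prod.smul_mk, zsmul_eq_mul, Prod.mk_add_mk, Prod.ext_iff]
        norm_num <;> ring
      · refine ⟨1, 1, ?_⟩
        simp only [Prod.smul_mk, zsmul_eq_mul, Prod.mk_add_mk, Prod.ext_iff]
        norm_num <;> ring
end

section
/- The intersection of the four lattices in ℝ³ generated respectively by the rows of [[2,1,1],[1,2,-1],[-2,2,2]], [[1,2,1],[-1,1,2],[2,-2,2]], [[1,1,2],[2,-1,1],[2,2,-2]], and [[2,-1,-1],[-1,2,-1],[2,2,2]] equals the lattice generated by (3,3,0), (3,-3,0), (0,3,-3). -/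
lemma mem_span_triple {a b c x : Fin 3 → ℝ} :
    x ∈ Submodule.span ℤ ({a, b, c} : Set (Fin 3 → ℝ)) ↔
      ∃ p q r : ℤ, x = p • a + q • b + r • c := by
  constructor
  · intro h
    rw [Submodule.mem_span_insert] at h
    obtain ⟨p, y, hy, rfl⟩ := h
    rw [Submodule.mem_span_insert] at hy
    obtain ⟨q, z, hz, rfl⟩ := hy
    rw [Submodule.mem_span_singleton] at hz
    obtain ⟨r, rfl⟩ := hz
    exact ⟨p, q, r, by rw [add_assoc]⟩
  · rintro ⟨p, q, r, rfl⟩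
    have ha : a ∈ ({a, b, c} : Set (Fin 3 → ℝ)) := by simp
    have hb : b ∈ ({a, b, c} : Set (Fin 3 → ℝ)) := by simp
    have hc : c ∈ ({a, b, c} : Set (Fin 3 → ℝ)) := by simp
    exact Submodule.add_mem _
      (Submodule.add_mem _ (Submodule.smul_mem _ _ (Submodule.subset_span ha))
        (Submodule.smul_mem _ _ (Submodule.subset_span hb)))
      (Submodule.smul_mem _ _ (Submodule.subset_span hc))

lemma hw00 : (![3,3,0] : Fin 3 → ℝ) ∈ Submodule.span ℤ ({![2,1,1], ![1,2,-1], ![-2,2,2]} : Set (Fin 3 → ℝ)) := by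
  rw [mem_span_triple]
  refine ⟨1, 1, 0, ?_⟩
  funext k
  fin_cases k <;> norm_num

lemma hw01 : (![3,-3,0] : Fin 3 → ℝ) ∈ Submodule.span ℤ ({![2,1,1], ![1,2,-1], ![-2,2,2]} : Set (Fin 3 → ℝ)) := by
  rw [mem_span_triple]
  refine ⟨1, -1, -1, ?_⟩
  funext k
  fin_cases k <;> norm_num

lemma hw02 : (![0,3,-3] : Fin 3 → ℝ) ∈ Submodule.span ℤ ({![2,1,1], ![1,2,-1], ![-2,2,2]} : Set (Fin 3 → ℝ)) := by
  rw [mem_span_triple]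
  refine ⟨-1, 2, 0, ?_⟩
  funext k
  fin_cases k <;> norm_num

lemma hw10 : (![3,3,0] : Fin 3 → ℝ) ∈ Submodule.span ℤ ({![1,2,1], ![-1,1,2], ![2,-2,2]} : Set (Fin 3 → ℝ)) := by
  rw [mem_span_triple]
  refine ⟨2, -1, 0, ?_⟩
  funext k
  fin_cases k <;> norm_num

lemma hw11 : (![3,-3,0] : Fin 3 → ℝ) ∈ Submodule.span ℤ ({![1,2,1], ![-1,1,2], ![2,-2,2]} : Set (Fin 3 → ℝ)) := by
  rw [mem_span_triple]
  refine ⟨0, -1, 1, ?_⟩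
  funext k
  fin_cases k <;> norm_num

lemma hw12 : (![0,3,-3] : Fin 3 → ℝ) ∈ Submodule.span ℤ ({![1,2,1], ![-1,1,2], ![2,-2,2]} : Set (Fin 3 → ℝ)) := by
  rw [mem_span_triple]
  refine ⟨1, -1, -1, ?_⟩
  funext k
  fin_cases k <;> norm_num

lemma hw20 : (![3,3,0] : Fin 3 → ℝ) ∈ Submodule.span ℤ ({![1,1,2], ![2,-1,1], ![2,2,-2]} : Set (Fin 3 → ℝ)) := by
  rw [mem_span_triple]
  refine ⟨1, 0, 1, ?_⟩
  funext k
  fin_cases k <;> norm_num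

lemma hw21 : (![3,-3,0] : Fin 3 → ℝ) ∈ Submodule.span ℤ ({![1,1,2], ![2,-1,1], ![2,2,-2]} : Set (Fin 3 → ℝ)) := by
  rw [mem_span_triple]
  refine ⟨-1, 2, 0, ?_⟩
  funext k
  fin_cases k <;> norm_num

lemma hw22 : (![0,3,-3] : Fin 3 → ℝ) ∈ Submodule.span ℤ ({![1,1,2], ![2,-1,1], ![2,2,-2]} : Set (Fin 3 → ℝ)) := by
  rw [mem_span_triple]
  refine ⟨0, -1, 1, ?_⟩
  funext k
  fin_cases k <;> norm_num

lemma hw30 : (![3,3,0] : Fin 3 → ℝ) ∈ Submodule.span ℤ ({![2,-1,-1], ![-1,2,-1], ![2,2,2]} : Set (Fin 3 → ℝ)) := by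
  rw [mem_span_triple]
  refine ⟨1, 1, 1, ?_⟩
  funext k
  fin_cases k <;> norm_num

lemma hw31 : (![3,-3,0] : Fin 3 → ℝ) ∈ Submodule.span ℤ ({![2,-1,-1], ![-1,2,-1], ![2,2,2]} : Set (Fin 3 → ℝ)) := by
  rw [mem_span_triple]
  refine ⟨1, -1, 0, ?_⟩
  funext k
  fin_cases k <;> norm_num

lemma hw32 : (![0,3,-3] : Fin 3 → ℝ) ∈ Submodule.span ℤ ({![2,-1,-1], ![-1,2,-1], ![2,2,2]} : Set (Fin 3 → ℝ)) := by
  rw [mem_span_triple]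
  refine ⟨1, 2, 0, ?_⟩
  funext k
  fin_cases k <;> norm_num

/-- The fcc lattice as the intersection of four "prismatic" lattices. -/
theorem fcc_as_intersection_of_four :
    Submodule.span ℤ ({![2,1,1], ![1,2,-1], ![-2,2,2]} : Set (Fin 3 → ℝ)) ⊓
      Submodule.span ℤ ({![1,2,1], ![-1,1,2], ![2,-2,2]} : Set (Fin 3 → ℝ)) ⊓
      Submodule.span ℤ ({![1,1,2], ![2,-1,1], ![2,2,-2]} : Set (Fin 3 → ℝ)) ⊓
      Submodule.span ℤ ({![2,-1,-1], ![-1,2,-1], ![2,2,2]} : Set (Fin 3 → ℝ)) =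
    Submodule.span ℤ ({![3,3,0], ![3,-3,0], ![0,3,-3]} : Set (Fin 3 → ℝ)) := by
  apply le_antisymm
  · intro x hx
    simp only [Submodule.mem_inf] at hx
    obtain ⟨⟨⟨h1, h2⟩, -⟩, -⟩ := hx
    rw [mem_span_triple] at h1 h2 ⊢
    obtain ⟨p, q, r, hp⟩ := h1
    obtain ⟨s, t, u, hs⟩ := h2
    have a0 : x 0 = ((2*p+q-2*r : ℤ) : ℝ) := by
      have := congrFun hp 0; simp at this; push_cast; rw [this]; ring
    have a1 : x 1 = ((p+2*q+2*r : ℤ) : ℝ) := by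
      have := congrFun hp 1; simp at this; push_cast; rw [this]; ring
    have a2 : x 2 = ((p-q+2*r : ℤ) : ℝ) := by
      have := congrFun hp 2; simp at this; push_cast; rw [this]; ring
    have b0 : x 0 = ((s-t+2*u : ℤ) : ℝ) := by
      have := congrFun hs 0; simp at this; push_cast; rw [this]; ring
    have b1 : x 1 = ((2*s+t-2*u : ℤ) : ℝ) := by
      have := congrFun hs 1; simp at this; push_cast; rw [this]; ring
    have b2 : x 2 = ((s+2*t+2*u : ℤ) : ℝ) := by
      have := congrFun hs 2; simp at this; push_cast; rw [this]; ring
    have e0 : (2*p+q-2*r : ℤ) = s-t+2*u := by exact_mod_cast a0.symm.trans b0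
    have e1 : (p+2*q+2*r : ℤ) = 2*s+t-2*u := by exact_mod_cast a1.symm.trans b1
    have e2 : (p-q+2*r : ℤ) = s+2*t+2*u := by exact_mod_cast a2.symm.trans b2
    obtain ⟨S, hS⟩ : (6 : ℤ) ∣ (2*p+q-2*r)+(p+2*q+2*r)+(p-q+2*r) := by omega
    obtain ⟨n0, h0⟩ : (3 : ℤ) ∣ 2*p+q-2*r := by omega
    obtain ⟨n2, h2'⟩ : (3 : ℤ) ∣ p-q+2*r := by omega
    refine ⟨S, n0 - S, -n2, funext fun i => ?_⟩
    have hI0 : (2*p+q-2*r : ℤ) = S*3 + (n0-S)*3 + (-n2)*0 := by omega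
    have hI1 : (p+2*q+2*r : ℤ) = S*3 + (n0-S)*(-3) + (-n2)*3 := by omega
    have hI2 : (p-q+2*r : ℤ) = S*0 + (n0-S)*0 + (-n2)*(-3) := by omega
    fin_cases i
    · show x 0 = ((S • ![3,3,0] + (n0-S) • ![3,-3,0] + (-n2) • ![0,3,-3] : Fin 3 → ℝ)) 0
      rw [a0]
      simp only [Pi.add_apply, Pi.smul_apply, Matrix.cons_val_zero]
      simp only [zsmul_eq_mul]
      push_cast
      have : ((2*p+q-2*r : ℤ) : ℝ) = (S:ℝ)*3 + ((n0:ℝ)-S)*3 + (-(n2:ℝ))*0 := by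
        exact_mod_cast hI0
      push_cast at this
      linarith
    · show x 1 = ((S • ![3,3,0] + (n0-S) • ![3,-3,0] + (-n2) • ![0,3,-3] : Fin 3 → ℝ)) 1
      rw [a1]
      simp only [Pi.add_apply, Pi.smul_apply, Matrix.cons_val_one, Matrix.head_cons]
      simp only [zsmul_eq_mul]
      push_cast
      have : ((p+2*q+2*r : ℤ) : ℝ) = (S:ℝ)*3 + ((n0:ℝ)-S)*(-3) + (-(n2:ℝ))*3 := by
        exact_mod_cast hI1
      push_cast at this
      linarith
    · show x 2 = ((S • ![3,3,0] + (n0-S) • ![3,-3,0] + (-n2) • ![0,3,-3] : Fin 3 → ℝ)) 2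
      rw [a2]
      simp only [Pi.add_apply, Pi.smul_apply, Matrix.cons_val_two, Matrix.tail_cons, Matrix.head_cons]
      simp only [zsmul_eq_mul]
      push_cast
      have : ((p-q+2*r : ℤ) : ℝ) = (S:ℝ)*0 + ((n0:ℝ)-S)*0 + (-(n2:ℝ))*(-3) := by
        exact_mod_cast hI2
      push_cast at this
      linarith
  · intro x hx
    rw [mem_span_triple] at hx
    obtain ⟨p, q, r, rfl⟩ := hx
    simp only [Submodule.mem_inf]
    refine ⟨⟨⟨?_, ?_⟩, ?_⟩, ?_⟩
    · exact Submodule.add_mem _ (Submodule.add_mem _ (Submodule.smul_mem _ p hw00)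
        (Submodule.smul_mem _ q hw01)) (Submodule.smul_mem _ r hw02)
    · exact Submodule.add_mem _ (Submodule.add_mem _ (Submodule.smul_mem _ p hw10)
        (Submodule.smul_mem _ q hw11)) (Submodule.smul_mem _ r hw12)
    · exact Submodule.add_mem _ (Submodule.add_mem _ (Submodule.smul_mem _ p hw20)
        (Submodule.smul_mem _ q hw21)) (Submodule.smul_mem _ r hw22)
    · exact Submodule.add_mem _ (Submodule.add_mem _ (Submodule.smul_mem _ p hw30)
        (Submodule.smul_mem _ q hw31)) (Submodule.smul_mem _ r hw32)
end

section
/- Let Λ ⊆ ℝⁿ be a lattice and T: Λ → Λ a linear similarity with ⟨Tu,Tu⟩ = 2⟨u,u⟩ for all u ∈ Λ and 2Λ ⊂ TΛ. Suppose m is a positive integer such that for every v ∈ Λ of norm 2m there exist vectors v₁,…,vₐ ∈ Λ of norm 2m, pairwise orthogonal, with v₁ = v, all congruent to v mod 2Λ. Then for every u ∈ Λ of norm m there exist pairwise orthogonal vectors u₁,…,uₐ ∈ Λ of norm m with u₁ = u. -/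
/-- Euclidean dot product on ℝⁿ. -/
def dotR {n : ℕ} (u v : Fin n → ℝ) : ℝ := ∑ i, u i * v i

lemma dotR_self_eq_zero {n : ℕ} {x : Fin n → ℝ} (h : dotR x x = 0) : x = 0 := by
  funext i
  have := (Finset.sum_eq_zero_iff_of_nonneg
    (fun i _ => mul_self_nonneg (x i))).mp h i (Finset.mem_univ i)
  simpa using mul_self_eq_zero.mp this

/-- Conway's norm-doubling argument: if every norm-2m vector of Λ lies in a
coordinate frame of norm-2m vectors within its class mod 2Λ, and Λ admits a
norm-doubling similarity T with 2Λ ⊂ TΛ, then every norm-m vector of Λ lies in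
a coordinate frame of norm-m vectors. -/
theorem norm_doubling_frames (n a : ℕ) (ha : 0 < a)
    (L : Submodule ℤ (Fin n → ℝ)) (T : (Fin n → ℝ) →ₗ[ℝ] (Fin n → ℝ))
    (hTL : ∀ x ∈ L, T x ∈ L)
    (hTsim : ∀ u v : Fin n → ℝ, dotR (T u) (T v) = 2 * dotR u v)
    (hT2 : ∀ x ∈ L, ∃ y ∈ L, T y = (2 : ℝ) • x)
    (m : ℕ) (hm : 0 < m)
    (hframe : ∀ v ∈ L, dotR v v = 2 * m →
      ∃ w : Fin a → (Fin n → ℝ),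
        (∀ i, w i ∈ L ∧ dotR (w i) (w i) = 2 * m ∧ ∃ z ∈ L, w i - v = (2 : ℝ) • z) ∧
        (∀ i j, i ≠ j → dotR (w i) (w j) = 0) ∧
        w ⟨0, ha⟩ = v) :
    ∀ u ∈ L, dotR u u = m →
      ∃ w : Fin a → (Fin n → ℝ),
        (∀ i, w i ∈ L ∧ dotR (w i) (w i) = m) ∧
        (∀ i j, i ≠ j → dotR (w i) (w j) = 0) ∧
        w ⟨0, ha⟩ = u := by
  intro u hu hudot
  have hTinj : ∀ x : Fin n → ℝ, T x = 0 → x = 0 := by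
    intro x hx
    apply dotR_self_eq_zero
    have h1 := hTsim x x
    rw [hx] at h1
    have h0 : dotR (0 : Fin n → ℝ) 0 = 0 := by simp [dotR]
    rw [h0] at h1
    linarith
  have hTu : T u ∈ L := hTL u hu
  have hTudot : dotR (T u) (T u) = 2 * m := by rw [hTsim, hudot]
  obtain ⟨w, hw1, hw2, hw3⟩ := hframe (T u) hTu hTudot
  choose z hzL hz using fun i => (hw1 i).2.2
  choose y hyL hTy using fun i => hT2 (z i) (hzL i)
  have hTw : ∀ i, T (u + y i) = w i := by
    intro i
    have := hz i
    rw [map_add, hTy i]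
    have : w i = T u + (2:ℝ) • z i := by
      have := hz i; linear_combination this
    rw [this]
  refine ⟨fun i => u + y i, ?_, ?_, ?_⟩
  · intro i
    refine ⟨L.add_mem hu (hyL i), ?_⟩
    have h := hTsim (u + y i) (u + y i)
    rw [hTw i, (hw1 i).2.1] at h
    linarith
  · intro i j hij
    have h := hTsim (u + y i) (u + y j)
    rw [hTw i, hTw j, hw2 i j hij] at h
    linarith
  · have h0 : T (y ⟨0, ha⟩) = 0 := by
      rw [hTy]
      have := hz ⟨0, ha⟩
      rw [hw3] at this
      simp at this
      rw [← this]
    have := hTinj _ h0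
    simp [this]
end

section
/- The tetrahedron with vertices (1/2, 1/2, 1/2), (1/2, −1/2, 1/2), (1,0,0), (1,0,1/2) has volume 1/24 and second moment about its centroid equal to 1/512. -/
/-!
The affine map `y ↦ (1/2,1/2,1/2) + M y` with `det M = 1/4` carries the corner simplex
`{y ≥ 0, y₀ + y₁ + y₂ ≤ 1}` onto the tetrahedron, so every integral over the tetrahedron is
`1/4` times an integral over the corner simplex. Slicing off one coordinate at a time turns the
latter into an iterated integral with bounds `0 ≤ a ≤ 1`, `0 ≤ b ≤ 1 - a`, `0 ≤ c ≤ 1 - a - b`;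
for the polynomial integrands at hand these are evaluated in closed form. The centroid comes out
as `(3/4, 0, 3/8)`, the mean of the vertices.
-/

open MeasureTheory

/-- Cell 𝒫₃ of the bcc honeycomb: the tetrahedron with vertices
(1/2,1/2,1/2), (1/2,-1/2,1/2), (1,0,0), (1,0,1/2). -/
noncomputable def tetCell : Set (Fin 3 → ℝ) :=
  convexHull ℝ {![1/2, 1/2, 1/2], ![1/2, -1/2, 1/2], ![1, 0, 0], ![1, 0, 1/2]}

/-- Centroid of the tetrahedron: its integral divided by its volume 1/24. -/
noncomputable def tetCentroid : Fin 3 → ℝ := (24 : ℝ) • ∫ x in tetCell, x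

open Set

theorem setIntegral_eq_integral_setIntegral_prodMk {α β E : Type*} [MeasurableSpace α]
    [MeasurableSpace β] [NormedAddCommGroup E] [NormedSpace ℝ E] {μ : Measure α} {ν : Measure β}
    [SFinite μ] [SFinite ν] {s : Set (α × β)} (hs : MeasurableSet s) {f : α × β → E}
    (hf : IntegrableOn f s (μ.prod ν)) :
    ∫ p in s, f p ∂μ.prod ν = ∫ x, ∫ y in Prod.mk x ⁻¹' s, f (x, y) ∂ν ∂μ := by
  rw [← integral_indicator hs, integral_prod _ ((integrable_indicator_iff hs).2 hf)]
  congr 1 with x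
  rw [← integral_indicator (measurable_prodMk_left hs)]
  rfl

theorem ContinuousAffineMap.setIntegral_image {E F : Type*} [NormedAddCommGroup E]
    [NormedSpace ℝ E] [FiniteDimensional ℝ E] [MeasurableSpace E] [BorelSpace E]
    [NormedAddCommGroup F] [NormedSpace ℝ F] (μ : Measure E) [μ.IsAddHaarMeasure]
    (f : E →ᴬ[ℝ] E) (hf : f.contLinear.det ≠ 0) {s : Set E} (hs : MeasurableSet s) (g : E → F) :
    ∫ x in f '' s, g x ∂μ = |f.contLinear.det| • ∫ x in s, g (f x) ∂μ := by
  have hinj : Function.Injective f :=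
    f.toAffineMap.linear_injective_iff.1
      ((Module.End.isUnit_iff _).1 ((LinearMap.isUnit_iff_isUnit_det _).2 hf.isUnit)).1
  rw [integral_image_eq_integral_abs_det_fderiv_smul μ hs (fun _ _ => f.hasFDerivWithinAt)
    hinj.injOn, integral_smul]

/- `simp` eta-reduces `fun x => r * x` and `fun x => r - x` to `(r * ·)` and `(r - ·)`, which
`intervalIntegral.integral_const_mul` and `intervalIntegral.integral_sub` then no longer match. -/
theorem integral_const_mul_id (r a b : ℝ) : ∫ x in a..b, r * x = r * ((b ^ 2 - a ^ 2) / 2) := by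
  rw [intervalIntegral.integral_const_mul, integral_id]

theorem integral_const_sub_id (r a b : ℝ) :
    ∫ x in a..b, r - x = (b - a) * r - (b ^ 2 - a ^ 2) / 2 := by
  rw [intervalIntegral.integral_sub intervalIntegrable_const
    intervalIntegral.intervalIntegrable_id, intervalIntegral.integral_const, integral_id,
    smul_eq_mul]

def cornerSimplex (n : ℕ) (c : ℝ) : Set (Fin n → ℝ) := {y | (∀ i, 0 ≤ y i) ∧ ∑ i, y i ≤ c}

namespace cornerSimplex

variable {n : ℕ} {c : ℝ}

theorem isClosed : IsClosed (cornerSimplex n c) := by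
  simp only [cornerSimplex, ofPred_and, ofPred_forall]
  exact (isClosed_iInter fun i => isClosed_le continuous_const (continuous_apply i)).inter
    (isClosed_le (by fun_prop) continuous_const)

theorem isCompact : IsCompact (cornerSimplex n c) :=
  isCompact_Icc.of_isClosed_subset isClosed fun _ hy =>
    ⟨hy.1, fun i => (Finset.single_le_sum (fun j _ => hy.1 j) (Finset.mem_univ i)).trans hy.2⟩

theorem convex : Convex ℝ (cornerSimplex n c) := by
  rintro x ⟨hx0, hxc⟩ y ⟨hy0, hyc⟩ a b ha hb hab
  refine ⟨fun i => ?_, ?_⟩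
  · simp only [Pi.add_apply, Pi.smul_apply, smul_eq_mul]
    have := hx0 i; have := hy0 i; positivity
  · simp only [Pi.add_apply, Pi.smul_apply, smul_eq_mul, Finset.sum_add_distrib,
      ← Finset.mul_sum]
    have : a * c + b * c = c := by rw [← add_mul, hab, one_mul]
    linarith [mul_le_mul_of_nonneg_left hxc ha, mul_le_mul_of_nonneg_left hyc hb]

theorem eq_empty_of_neg (hc : c < 0) : cornerSimplex n c = ∅ :=
  eq_empty_of_forall_notMem fun _ hy =>
    (Finset.sum_nonneg fun i _ => hy.1 i).not_gt (hy.2.trans_lt hc)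

theorem cons_mem_succ_iff {a : ℝ} {y : Fin n → ℝ} :
    (Fin.cons a y : Fin (n + 1) → ℝ) ∈ cornerSimplex (n + 1) c ↔
      0 ≤ a ∧ y ∈ cornerSimplex n (c - a) := by
  simp only [cornerSimplex, mem_ofPred_eq, Fin.forall_fin_succ, Fin.sum_univ_succ, Fin.cons_zero,
    Fin.cons_succ, le_sub_iff_add_le', and_assoc]

theorem convexHull_eq :
    convexHull ℝ (insert 0 (range fun i : Fin n => Pi.single i 1)) = cornerSimplex n 1 := by
  refine (convexHull_min ?_ convex).antisymm fun y hy => ?_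
  · rintro _ (rfl | ⟨i, rfl⟩)
    · exact ⟨fun _ => le_rfl, by simp⟩
    · exact ⟨fun j => by simp [Pi.single_apply]; split_ifs <;> norm_num, by simp⟩
  · let w : Fin (n + 1) → ℝ := Fin.cons (1 - ∑ i, y i) y
    let z : Fin (n + 1) → Fin n → ℝ := Fin.cons 0 fun i => Pi.single i 1
    have hw : ∑ i, w i = 1 := by simp [w, Fin.sum_univ_succ]
    have hmem := Finset.centerMass_mem_convexHull (t := Finset.univ) (w := w) (z := z)
      (s := insert 0 (range fun i : Fin n => Pi.single i 1))
      (fun i _ => Fin.cases (by simpa [w] using hy.2) (fun i => by simpa [w] using hy.1 i) i)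
      (by rw [hw]; exact one_pos) (fun i _ => Fin.cases (by simp [z]) (fun i => by simp [z]) i)
    rw [Finset.centerMass_eq_of_sum_1 _ _ hw, Fin.sum_univ_succ] at hmem
    convert hmem using 1
    ext j
    simp [w, z, Pi.single_apply]

theorem setIntegral_zero (hc : 0 ≤ c) (g : (Fin 0 → ℝ) → ℝ) :
    ∫ y in cornerSimplex 0 c, g y = g ![] := by
  have : cornerSimplex 0 c = univ := eq_univ_of_forall fun _ => ⟨finZeroElim, by simpa using hc⟩
  rw [this, Measure.restrict_univ, volume_pi, Measure.pi_of_empty (x := ![]), integral_dirac]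

theorem setIntegral_succ (hc : 0 ≤ c) {g : (Fin (n + 1) → ℝ) → ℝ} (hg : Continuous g) :
    ∫ y in cornerSimplex (n + 1) c, g y =
      ∫ a in 0..c, ∫ y in cornerSimplex n (c - a), g (Fin.cons a y) := by
  let e := (MeasurableEquiv.piFinSuccAbove (fun _ : Fin (n + 1) => ℝ) 0).symm
  have he : MeasurePreserving e := (volume_preserving_piFinSuccAbove _ 0).symm
  have he_apply : ∀ p, e p = Fin.cons p.1 p.2 := fun p => Fin.insertNth_zero' p.1 p.2
  have hslice : ∀ a, Prod.mk a ⁻¹' (e ⁻¹' cornerSimplex (n + 1) c) =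
      {y | 0 ≤ a ∧ y ∈ cornerSimplex n (c - a)} := fun a => by
    ext y; simp only [mem_preimage, he_apply, cons_mem_succ_iff, mem_ofPred_eq]
  rw [← he.setIntegral_preimage_emb e.measurableEmbedding]
  refine (setIntegral_eq_integral_setIntegral_prodMk (f := fun p => g (e p))
    (isClosed.measurableSet.preimage e.measurable)
    ((he.integrableOn_comp_preimage e.measurableEmbedding).2
      (hg.continuousOn.integrableOn_compact isCompact))).trans ?_
  rw [← setIntegral_eq_integral_of_forall_compl_eq_zero (s := Icc 0 c),
    integral_Icc_eq_integral_Ioc, ← intervalIntegral.integral_of_le hc]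
  · refine intervalIntegral.integral_congr fun a ha => ?_
    rw [uIcc_of_le hc] at ha
    simp only [hslice, ha.1, true_and, he_apply, ofPred_mem_eq]
  · intro a ha
    have hempty : {y | 0 ≤ a ∧ y ∈ cornerSimplex n (c - a)} = ∅ := by
      rcases le_or_gt 0 a with h0 | h0
      · have hca : c - a < 0 := by
          simp only [mem_Icc, h0, true_and, not_le] at ha; linarith
        simp only [h0, true_and, eq_empty_of_neg hca, ofPred_mem_eq]
      · simp only [h0.not_ge, false_and, ofPred_false]
    rw [hslice, hempty, Measure.restrict_empty, integral_zero_measure]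

theorem setIntegral_three {g : (Fin 3 → ℝ) → ℝ} (hg : Continuous g) :
    ∫ y in cornerSimplex 3 1, g y =
      ∫ a in 0..1, ∫ b in 0..1 - a, ∫ c in 0..1 - a - b, g ![a, b, c] := by
  rw [setIntegral_succ zero_le_one hg]
  refine intervalIntegral.integral_congr fun a ha => ?_
  rw [uIcc_of_le zero_le_one] at ha
  rw [setIntegral_succ (g := fun y => g (Fin.cons a y)) (sub_nonneg.2 ha.2) (by fun_prop)]
  refine intervalIntegral.integral_congr fun b hb => ?_
  rw [uIcc_of_le (sub_nonneg.2 ha.2)] at hb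
  rw [setIntegral_succ (g := fun y => g (Fin.cons a (Fin.cons b y))) (sub_nonneg.2 hb.2)
    (by fun_prop)]
  refine intervalIntegral.integral_congr fun c hc => ?_
  rw [uIcc_of_le (sub_nonneg.2 hb.2)] at hc
  exact setIntegral_zero (sub_nonneg.2 hc.2) _

end cornerSimplex

/-- Sends `0, e₀, e₁, e₂` to the vertices of `tetCell` in the listed order: the columns of the
matrix are the edges issuing from the first vertex. -/
noncomputable def tetChart : (Fin 3 → ℝ) →ᴬ[ℝ] (Fin 3 → ℝ) :=
  ContinuousLinearMap.toContinuousAffineMap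
      (Matrix.toLin' !![0, 1/2, 1/2; -1, -1/2, -1/2; 0, -1/2, 0]).toContinuousLinearMap +
    ContinuousAffineMap.const ℝ _ ![1/2, 1/2, 1/2]

theorem tetChart_apply (a b c : ℝ) :
    tetChart ![a, b, c] = ![1/2 + b/2 + c/2, 1/2 - a - b/2 - c/2, 1/2 - b/2] := by
  ext i; fin_cases i <;> simp [tetChart] <;> ring

theorem det_tetChart : tetChart.contLinear.det = 1/4 := by
  simp [tetChart, LinearMap.det_toLin', Matrix.det_fin_three]
  norm_num

theorem tetCell_eq_image : tetCell = tetChart '' cornerSimplex 3 1 := by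
  have hvert : tetChart '' insert 0 (range fun i : Fin 3 => Pi.single i 1) =
      {![1/2, 1/2, 1/2], ![1/2, -1/2, 1/2], ![1, 0, 0], ![1, 0, 1/2]} := by
    simp only [image_insert_eq, Fin.range_fin_succ, range_eq_empty, insert_empty_eq,
      image_singleton]
    refine congrArg₂ insert ?_ (congrArg₂ insert ?_ (congrArg₂ insert ?_ (congrArg _ ?_))) <;>
      ext i <;> fin_cases i <;> simp [tetChart, Fin.tail] <;> norm_num
  rw [tetCell, ← hvert, ← cornerSimplex.convexHull_eq, ← ContinuousAffineMap.coe_toAffineMap,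
    AffineMap.image_convexHull]

theorem isCompact_tetCell : IsCompact tetCell :=
  (toFinite _).isCompact_convexHull (𝕜 := ℝ)

theorem setIntegral_tetCell {g : (Fin 3 → ℝ) → ℝ} (hg : Continuous g) :
    ∫ x in tetCell, g x = 4⁻¹ * ∫ a in 0..1, ∫ b in 0..1 - a, ∫ c in 0..1 - a - b,
      g ![1/2 + b/2 + c/2, 1/2 - a - b/2 - c/2, 1/2 - b/2] := by
  rw [tetCell_eq_image, tetChart.setIntegral_image volume (by rw [det_tetChart]; norm_num)
    cornerSimplex.isClosed.measurableSet, det_tetChart,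
    cornerSimplex.setIntegral_three (g := fun y => g (tetChart y)) (by fun_prop)]
  simp only [tetChart_apply]
  norm_num

theorem volume_tetCell : volume tetCell = ENNReal.ofReal (1 / 24) := by
  have hint : ∫ _ in tetCell, (1 : ℝ) = 1 / 24 := by
    rw [setIntegral_tetCell continuous_const]
    ring_nf
    repeat (simp (disch := (apply Continuous.intervalIntegrable; fun_prop))
      [intervalIntegral.integral_sub, integral_const_sub_id]; ring_nf)
  rw [setIntegral_const, smul_eq_mul, mul_one] at hint
  rw [← hint, ofReal_measureReal isCompact_tetCell.measure_lt_top.ne]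

theorem integral_tetCell_id : ∫ x in tetCell, x = ![1/32, 0, 1/64] := by
  ext i
  rw [eval_integral fun j => (continuous_apply j).continuousOn.integrableOn_compact
    isCompact_tetCell, setIntegral_tetCell (continuous_apply i)]
  fin_cases i <;> ring_nf <;>
    repeat (simp (disch := (apply Continuous.intervalIntegrable; fun_prop))
      [intervalIntegral.integral_add, intervalIntegral.integral_sub, integral_const_mul_id,
        integral_const_sub_id]; ring_nf)

theorem tetCentroid_eq : tetCentroid = ![3/4, 0, 3/8] := by
  rw [tetCentroid, integral_tetCell_id]
  ext i; fin_cases i <;> simp <;> norm_num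

theorem integral_tetCell_dist_sq_centroid :
    ∫ x in tetCell, ∑ i, (x i - ![3/4, 0, 3/8] i) ^ 2 = 1 / 512 := by
  rw [setIntegral_tetCell (by fun_prop)]
  simp only [Fin.sum_univ_three, Matrix.cons_val]
  ring_nf
  repeat (simp (disch := (apply Continuous.intervalIntegrable; fun_prop))
    [intervalIntegral.integral_add, intervalIntegral.integral_sub, integral_const_mul_id,
      integral_const_sub_id]; ring_nf)

/-- The tetrahedron has volume 1/24 and second moment about its centroid 1/512. -/
theorem tet_volume_and_moment :
    volume tetCell = ENNReal.ofReal (1 / 24) ∧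
    (∫ x in tetCell, ∑ i, (x i - tetCentroid i) ^ 2) = 1 / 512 :=
  ⟨volume_tetCell, tetCentroid_eq ▸ integral_tetCell_dist_sq_centroid⟩
end
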